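/- A finite set of vectors 𝒱 ⊆ {0,1,…,k−1}^n ⊆ ℝ^n is extremal if and only if there is a finite family 𝒢 ⊆ ℝ[x_1,…,x_n] of degree dominated polynomials that forms a universal Gröbner basis of the vanishing ideal I(𝒱). -/

import Mathlib

open MvPolynomial

/-- Monomials of `𝔽[x_1,…,x_n]` identified with their exponent vectors. -/
abbrev Mon (n : ℕ) := Fin n →₀ ℕ

/-- A linear order on monomials is a term order if `1` (i.e. the zero exponent
vector) is minimal and the order is compatible with multiplication by monomials. -/
def IsTermOrder {n : ℕ} (lin : LinearOrder (Mon n)) : Prop :=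
  (∀ u : Mon n, lin.le 0 u) ∧
    ∀ u v w : Mon n, lin.le u v → lin.le (u + w) (v + w)

/-- The strict lexicographic comparison of exponent vectors induced by the variable
ordering `x_{σ 0} ≻ x_{σ 1} ≻ ⋯ ≻ x_{σ (n-1)}`. -/
def lexLt {n : ℕ} (σ : Equiv.Perm (Fin n)) (u v : Mon n) : Prop :=
  ∃ j : Fin n, u (σ j) < v (σ j) ∧ ∀ i : Fin n, i < j → u (σ i) = v (σ i)

/-- `lin` is the lexicographic term order induced by the variable ordering
`x_{σ 0} ≻ x_{σ 1} ≻ ⋯ ≻ x_{σ (n-1)}`. -/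
def IsLexOrder {n : ℕ} (σ : Equiv.Perm (Fin n)) (lin : LinearOrder (Mon n)) : Prop :=
  ∀ u v : Mon n, lin.lt u v ↔ lexLt σ u v

/-- `m` is the leading monomial of `f` with respect to the monomial order `lin`. -/
def IsLeadMon {n : ℕ} {F : Type*} [CommSemiring F] (lin : LinearOrder (Mon n))
    (f : MvPolynomial (Fin n) F) (m : Mon n) : Prop :=
  m ∈ f.support ∧ ∀ m' ∈ f.support, lin.le m' m

/-- The set of standard monomials of an ideal `I` with respect to the monomial
order `lin`: monomials that are not the leading monomial of any nonzero `f ∈ I`. -/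
def stdMon {n : ℕ} {F : Type*} [CommSemiring F] (lin : LinearOrder (Mon n))
    (I : Ideal (MvPolynomial (Fin n) F)) : Set (Mon n) :=
  { m | ¬ ∃ f ∈ I, f ≠ 0 ∧ IsLeadMon lin f m }

/-- The vanishing ideal of a point set `V ⊆ F^n`. -/
def vanishIdeal {n : ℕ} {F : Type*} [CommRing F] (V : Set (Fin n → F)) :
    Ideal (MvPolynomial (Fin n) F) where
  carrier := { f | ∀ v ∈ V, MvPolynomial.eval v f = 0 }
  add_mem' := by
    intro a b ha hb v hv
    simp [map_add, ha v hv, hb v hv]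
  zero_mem' := by intro v hv; simp
  smul_mem' := by
    intro c f hf v hv
    simp [smul_eq_mul, hf v hv]

/-- A finite point set (in `{0,…,k-1}^n`, over any field) is extremal if its vanishing
ideal has the same standard monomials for every lexicographic term order. -/
def IsExtremal {n : ℕ} {F : Type*} [CommRing F] (V : Set (Fin n → F)) : Prop :=
  ∀ (σ₁ σ₂ : Equiv.Perm (Fin n)) (lin₁ lin₂ : LinearOrder (Mon n)),
    IsLexOrder σ₁ lin₁ → IsLexOrder σ₂ lin₂ →
      stdMon lin₁ (vanishIdeal V) = stdMon lin₂ (vanishIdeal V)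

/-- Embedding of a point of `{0,…,k-1}^n` into `F^n`. -/
def toField {n k : ℕ} (F : Type*) [Field F] (w : Fin n → Fin k) : Fin n → F :=
  fun i => ((w i : ℕ) : F)

/-- Identification of a point of `{0,…,k-1}^n` with an exponent vector in `ℕ^n`. -/
noncomputable def toExp {n k : ℕ} (w : Fin n → Fin k) : Mon n :=
  Finsupp.equivFunOnFinite.symm fun i => (w i : ℕ)

/-- The downshift `D_i(V)` of `V ⊆ {0,…,k-1}^n` at coordinate `i`: its `i`-section at
each choice of the other coordinates is `{0,1,…,m-1}` where `m` is the size of the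
corresponding `i`-section of `V`. -/
def downshift {n k : ℕ} (V : Finset (Fin n → Fin k)) (i : Fin n) :
    Finset (Fin n → Fin k) :=
  Finset.univ.filter fun w =>
    (w i : ℕ) < (Finset.univ.filter fun α : Fin k => Function.update w i α ∈ V).card

/-- The iterated downshift `D_{σ(n-1)}(D_{σ(n-2)}(⋯(D_{σ 0}(V))))`,
i.e. downshifts are applied at coordinates `σ 0, σ 1, …, σ (n-1)` in this order. -/
def iterDownshift {n k : ℕ} (σ : Equiv.Perm (Fin n)) (V : Finset (Fin n → Fin k)) :
    Finset (Fin n → Fin k) :=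
  (List.ofFn fun j : Fin n => σ j).foldl downshift V

/-- A polynomial is degree dominated (with dominating term `x^w`) if it equals
`x^w + Σ αᵢ x^{vᵢ}` where each `x^{vᵢ}` divides `x^w`. -/
def IsDegDominated {n : ℕ} {F : Type*} [CommSemiring F]
    (f : MvPolynomial (Fin n) F) : Prop :=
  ∃ w : Mon n, MvPolynomial.coeff w f = 1 ∧ ∀ v ∈ f.support, v ≤ w

/-- `G` is a Gröbner basis of `I` with respect to the monomial order `lin`:
`G ⊆ I` and for every nonzero `f ∈ I` some `g ∈ G` has leading monomial dividing
the leading monomial of `f` (divisibility of monomials being `≤` of exponents). -/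
def IsGroebner {n : ℕ} {F : Type*} [CommSemiring F] (lin : LinearOrder (Mon n))
    (G : Finset (MvPolynomial (Fin n) F)) (I : Ideal (MvPolynomial (Fin n) F)) : Prop :=
  (∀ g ∈ G, g ∈ I) ∧
    ∀ f ∈ I, f ≠ 0 → ∀ m : Mon n, IsLeadMon lin f m →
      ∃ g ∈ G, ∃ mg : Mon n, IsLeadMon lin g mg ∧ mg ≤ m

/-- `G` is a universal Gröbner basis of `I` if it is a Gröbner basis for every term order. -/
def IsUnivGroebner {n : ℕ} {F : Type*} [CommSemiring F]
    (G : Finset (MvPolynomial (Fin n) F)) (I : Ideal (MvPolynomial (Fin n) F)) : Prop :=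
  ∀ lin : LinearOrder (Mon n), IsTermOrder lin → IsGroebner lin G I

/-- A term order is an elimination order with respect to `x_i` if `x_i` is greater
than every monomial not involving `x_i`. -/
def IsElimOrder {n : ℕ} (lin : LinearOrder (Mon n)) (i : Fin n) : Prop :=
  IsTermOrder lin ∧ ∀ m : Mon n, m i = 0 → lin.lt m (Finsupp.single i 1)

/-- A set system `𝓕` shatters `S` if every subset of `S` is the intersection of `S`
with a member of `𝓕`. -/
def Shatters {n : ℕ} (𝓕 : Finset (Finset (Fin n))) (S : Finset (Fin n)) : Prop :=
  ∀ T ⊆ S, ∃ Fm ∈ 𝓕, Fm ∩ S = T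

open scoped Classical in
/-- The family `Sh(𝓕)` of sets shattered by `𝓕`. -/
noncomputable def shatteredFamily {n : ℕ} (𝓕 : Finset (Finset (Fin n))) :
    Finset (Finset (Fin n)) :=
  Finset.univ.filter fun S => Shatters 𝓕 S

/-- A set system is shattering-extremal if it shatters exactly `|𝓕|` sets. -/
def IsSExtremal {n : ℕ} (𝓕 : Finset (Finset (Fin n))) : Prop :=
  (shatteredFamily 𝓕).card = 𝓕.card

/-- The characteristic vector of a set, as a point of `F^n`. -/
def charVec {n : ℕ} (F : Type*) [Field F] (Fm : Finset (Fin n)) : Fin n → F :=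
  fun i => if i ∈ Fm then 1 else 0

/-- The squarefree monomial `∏_{i ∈ S} x_i` associated to a set `S ⊆ [n]`,
as an exponent vector. -/
noncomputable def setMon {n : ℕ} (S : Finset (Fin n)) : Mon n :=
  Finsupp.equivFunOnFinite.symm fun i => if i ∈ S then 1 else 0

/-- The polynomial `f_{S,H} = (∏_{i∈H} x_i) ⬝ ∏_{i∈S∖H} (x_i - 1)`. -/
noncomputable def fSH {n : ℕ} (F : Type*) [Field F] (S H : Finset (Fin n)) :
    MvPolynomial (Fin n) F :=
  (∏ i ∈ H, X i) * ∏ i ∈ S \ H, (X i - 1)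

/-- The downshift `D_i(𝓕)` of a set system. -/
def dshiftSet {n : ℕ} (𝓕 : Finset (Finset (Fin n))) (i : Fin n) :
    Finset (Finset (Fin n)) :=
  𝓕.image (fun Fm => Fm.erase i) ∪ 𝓕.filter fun Fm => i ∈ Fm ∧ Fm.erase i ∈ 𝓕

/-- The iterated downshift `D_{σ(n-1)}(⋯(D_{σ 0}(𝓕)))` of a set system:
downshifts are applied at `σ 0, σ 1, …, σ (n-1)` in this order. -/
def iterDshiftSet {n : ℕ} (σ : Equiv.Perm (Fin n)) (𝓕 : Finset (Finset (Fin n))) :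
    Finset (Finset (Fin n)) :=
  (List.ofFn fun j : Fin n => σ j).foldl dshiftSet 𝓕

/-- Restriction of an exponent vector in `ℕ^{n+1}` to its first `n` coordinates. -/
noncomputable def restrictMon {n : ℕ} (w : Mon (n + 1)) : Mon n :=
  Finsupp.equivFunOnFinite.symm fun i => w i.castSucc


/-!
Fix an ideal `I` over a field. For a term order, reduction by leading terms writes every
monomial `x^m` modulo `I` as a combination of standard monomials not larger than `x^m`, and a
nonzero element of `I` is never supported on standard monomials. So if all lex orders share the
standard monomials `S`, the normal form of a nonstandard `x^m` is the same for every lex order: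
each of its monomials is lex-smaller than `x^m` for every ordering of the variables, i.e. divides
`x^m`, and `x^m` minus its normal form is degree dominated. Taking these polynomials for the
finitely many (Dickson) minimal nonstandard `m` gives `G`. A degree dominated polynomial has its
dominating term as leading monomial for every term order, so the standard monomials of any term
order are contained in, hence equal to, `S`, and `G` is a Gröbner basis for it. Conversely, a
degree dominated universal Gröbner basis fixes the standard monomials of every term order as the
monomials divisible by no dominating term.
-/

section TermOrder
variable {n : ℕ} {lin : LinearOrder (Mon n)}

theorem IsTermOrder.le_of_le (hT : IsTermOrder lin) {u v : Mon n} (h : u ≤ v) :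
    lin.le u v := by
  obtain ⟨c, rfl⟩ := le_iff_exists_add.1 h
  simpa [add_comm] using hT.2 0 c u (hT.1 c)

theorem IsTermOrder.wellFounded (hT : IsTermOrder lin) : WellFounded lin.lt := by
  rw [RelEmbedding.wellFounded_iff_isEmpty]
  refine ⟨fun f => ?_⟩
  obtain ⟨i, j, hij, hle⟩ := wellQuasiOrdered_le (α := Mon n) (f ·)
  exact @not_le_of_gt _ lin.toPreorder _ _ (f.map_rel_iff.2 hij) (hT.le_of_le hle)

theorem lexLt_of_lexLt_add_right {σ : Equiv.Perm (Fin n)} {u v w : Mon n}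
    (h : lexLt σ (u + w) (v + w)) : lexLt σ u v := by
  obtain ⟨j, hj, hpre⟩ := h
  exact ⟨j, by simpa using hj, fun i hi => by simpa using hpre i hi⟩

theorem IsLexOrder.isTermOrder {σ : Equiv.Perm (Fin n)} (h : IsLexOrder σ lin) :
    IsTermOrder lin := by
  let := lin
  refine ⟨fun u => not_lt.1 fun hu => ?_, fun u v w huv => not_lt.1 fun hlt => ?_⟩
  · obtain ⟨j, hj, -⟩ := (h u 0).1 hu
    exact Nat.not_lt_zero _ hj
  · exact not_lt.2 huv ((h v u).2 (lexLt_of_lexLt_add_right ((h _ _).1 hlt)))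

end TermOrder

section Lex
variable {n : ℕ}

noncomputable abbrev lexOrder (σ : Equiv.Perm (Fin n)) : LinearOrder (Mon n) :=
  LinearOrder.lift' (fun u : Mon n => toLex fun j => u (σ j)) fun u v h =>
    Finsupp.ext fun i => by simpa using congrFun (congrArg ofLex h) (σ.symm i)

theorem isLexOrder_lexOrder (σ : Equiv.Perm (Fin n)) : IsLexOrder σ (lexOrder σ) := by
  intro u v
  change Pi.Lex (· < ·) (· < ·) (fun j => u (σ j)) (fun j => v (σ j)) ↔ _
  exact ⟨fun ⟨j, hpre, hlt⟩ => ⟨j, hlt, hpre⟩,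
    fun ⟨j, hlt, hpre⟩ => ⟨j, hpre, hlt⟩⟩

theorem le_of_forall_lexLt {u v : Mon n} (h : ∀ σ : Equiv.Perm (Fin n), lexLt σ u v) :
    u ≤ v := by
  intro i
  by_contra! hi
  let i₀ : Fin n := ⟨0, i.pos⟩
  obtain ⟨j, hj, hpre⟩ := h (Equiv.swap i₀ i)
  rcases eq_or_ne j i₀ with rfl | hj₀
  · rw [Equiv.swap_apply_left] at hj
    omega
  · have := hpre i₀ (Fin.lt_def.2 (Nat.pos_of_ne_zero fun h => hj₀ (Fin.ext h)))
    rw [Equiv.swap_apply_left] at this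
    omega

end Lex

section LeadingMonomial
variable {n : ℕ} {F : Type*} [CommSemiring F] {lin : LinearOrder (Mon n)}

theorem exists_isLeadMon (lin : LinearOrder (Mon n)) {f : MvPolynomial (Fin n) F} (hf : f ≠ 0) :
    ∃ m, IsLeadMon lin f m := by
  let := lin
  obtain ⟨m, hm, hmax⟩ := f.support.exists_max_image id (support_nonempty.2 hf)
  exact ⟨m, hm, hmax⟩

theorem IsLeadMon.unique {f : MvPolynomial (Fin n) F} {m m' : Mon n} (h : IsLeadMon lin f m)
    (h' : IsLeadMon lin f m') : m = m' :=
  @le_antisymm _ lin.toPartialOrder _ _ (h'.2 m h.1) (h.2 m' h'.1)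

theorem IsLeadMon.ne_zero {f : MvPolynomial (Fin n) F} {m : Mon n} (h : IsLeadMon lin f m) :
    f ≠ 0 :=
  fun h0 => by simpa [h0] using h.1

theorem IsTermOrder.isLeadMon_monomial_mul (hT : IsTermOrder lin) {f : MvPolynomial (Fin n) F}
    {m : Mon n} (h : IsLeadMon lin f m) (u : Mon n) :
    IsLeadMon lin (monomial u 1 * f) (u + m) := by
  classical
  refine ⟨by simpa [coeff_monomial_mul] using h.1, fun t ht => ?_⟩
  rw [mem_support_iff, coeff_monomial_mul', one_mul] at ht
  split_ifs at ht with hut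
  · obtain ⟨v, rfl⟩ := le_iff_exists_add.1 hut
    simpa [add_comm u] using hT.2 _ _ u (h.2 v (by simpa using ht))
  · exact absurd rfl ht

theorem IsTermOrder.isLeadMon_of_le {f : MvPolynomial (Fin n) F} (hT : IsTermOrder lin)
    {w : Mon n} (hw : w ∈ f.support) (hle : ∀ v ∈ f.support, v ≤ w) : IsLeadMon lin f w :=
  ⟨hw, fun v hv => hT.le_of_le (hle v hv)⟩

end LeadingMonomial

section StandardMonomial
variable {n : ℕ} {F : Type*} {lin : LinearOrder (Mon n)}

section CommSemiring
variable [CommSemiring F] {I : Ideal (MvPolynomial (Fin n) F)}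

theorem IsLeadMon.notMem_stdMon {f : MvPolynomial (Fin n) F} {m : Mon n} (h : IsLeadMon lin f m)
    (hf : f ∈ I) : m ∉ stdMon lin I :=
  fun hm => hm ⟨f, hf, h.ne_zero, h⟩

theorem eq_zero_of_support_subset_stdMon {f : MvPolynomial (Fin n) F} (hf : f ∈ I)
    (hs : ↑f.support ⊆ stdMon lin I) : f = 0 := by
  by_contra h0
  obtain ⟨m, hm⟩ := exists_isLeadMon lin h0
  exact hm.notMem_stdMon hf (hs hm.1)

theorem IsTermOrder.mem_stdMon_of_le (hT : IsTermOrder lin) {m m' : Mon n}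
    (hm' : m' ∈ stdMon lin I) (h : m ≤ m') : m ∈ stdMon lin I := by
  rintro ⟨f, hf, -, hlead⟩
  obtain ⟨u, rfl⟩ := le_iff_exists_add.1 h
  rw [add_comm] at hm'
  exact (hT.isLeadMon_monomial_mul hlead u).notMem_stdMon (I.mul_mem_left _ hf) hm'

end CommSemiring

variable [Field F] {I : Ideal (MvPolynomial (Fin n) F)}

theorem IsTermOrder.monomial_mem_restrictSupport_sup (hT : IsTermOrder lin) (m : Mon n) :
    monomial m 1 ∈
      restrictSupport F {s | s ∈ stdMon lin I ∧ lin.le s m} ⊔ I.restrictScalars F := by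
  induction m using hT.wellFounded.induction with
  | _ m IH =>
  have hbelow : restrictSupport F {d | lin.lt d m} ≤
      restrictSupport F {s | s ∈ stdMon lin I ∧ lin.le s m} ⊔ I.restrictScalars F := by
    rw [restrictSupport_eq_span, Submodule.span_le]
    rintro _ ⟨d, hd, rfl⟩
    refine sup_le_sup_right (restrictSupport_mono F (t := {s | s ∈ stdMon lin I ∧ lin.le s m})
      fun s hs => ⟨hs.1, ?_⟩) _ (IH d hd)
    exact @le_trans _ lin.toPreorder _ _ _ hs.2 (@le_of_lt _ lin.toPreorder _ _ hd)
  by_cases hm : m ∈ stdMon lin I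
  · exact Submodule.mem_sup_left (by simp [hm])
  obtain ⟨f, hf, -, hlead⟩ := not_not.1 hm
  have hc : coeff m f ≠ 0 := mem_support_iff.1 hlead.1
  rw [← sub_add_cancel (monomial m 1) (C (coeff m f)⁻¹ * f)]
  refine add_mem (hbelow ((mem_restrictSupport_iff F).2 fun d hd => ?_))
    (Submodule.mem_sup_right (I.mul_mem_left _ hf))
  rw [Finset.mem_coe, mem_support_iff, coeff_sub, coeff_monomial, coeff_C_mul] at hd
  by_cases hdm : m = d
  · subst hdm
    simp [hc] at hd
  · rw [if_neg hdm, zero_sub, neg_ne_zero] at hd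
    exact @lt_of_le_of_ne _ lin.toPartialOrder _ _
      (hlead.2 d (mem_support_iff.2 (right_ne_zero_of_mul hd))) (Ne.symm hdm)

theorem IsTermOrder.exists_sub_mem_stdMon (hT : IsTermOrder lin) (m : Mon n) :
    ∃ r, monomial m 1 - r ∈ I ∧ ∀ s ∈ r.support, s ∈ stdMon lin I ∧ lin.le s m := by
  obtain ⟨r, hr, z, hz, hrz⟩ :=
    Submodule.mem_sup.1 (hT.monomial_mem_restrictSupport_sup (I := I) m)
  refine ⟨r, ?_, fun s hs => hr hs⟩
  rwa [← hrz, add_sub_cancel_left]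

theorem IsTermOrder.stdMon_eq_of_subset (hT : IsTermOrder lin) {lin' : LinearOrder (Mon n)}
    (h : stdMon lin I ⊆ stdMon lin' I) : stdMon lin I = stdMon lin' I := by
  classical
  refine h.antisymm fun s hs => by_contra fun hsn => ?_
  obtain ⟨r, hr, hrs⟩ := hT.exists_sub_mem_stdMon (I := I) s
  have hsupp : ↑(monomial s 1 - r).support ⊆ stdMon lin' I := by
    intro t ht
    rcases Finset.mem_union.1 (support_sub _ _ _ ht) with ht | ht
    · rwa [Finset.mem_singleton.1 (support_monomial_subset ht)]
    · exact h (hrs t ht).1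
  have hsr : monomial s 1 = r := sub_eq_zero.1 (eq_zero_of_support_subset_stdMon hr hsupp)
  exact hsn (hrs s (by simp [← hsr])).1

end StandardMonomial

section Groebner
variable {n : ℕ} {F : Type*} [CommSemiring F] [Nontrivial F] {lin : LinearOrder (Mon n)}
  {I : Ideal (MvPolynomial (Fin n) F)}

theorem IsTermOrder.stdMon_eq_of_isGroebner (hT : IsTermOrder lin)
    {G : Finset (MvPolynomial (Fin n) F)} (hdd : ∀ g ∈ G, IsDegDominated g)
    (hG : IsGroebner lin G I) :
    stdMon lin I =
      {m | ∀ g ∈ G, ∀ w, coeff w g = 1 → (∀ v ∈ g.support, v ≤ w) → ¬ w ≤ m} := by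
  have hlead {g : MvPolynomial (Fin n) F} {w : Mon n} (hw : coeff w g = 1)
      (hle : ∀ v ∈ g.support, v ≤ w) : IsLeadMon lin g w :=
    hT.isLeadMon_of_le (by simp [hw]) hle
  ext m
  refine ⟨fun hm g hg w hw hle hwm => ?_, fun hm => by_contra fun hmn => ?_⟩
  · exact (hlead hw hle).notMem_stdMon (hG.1 g hg) (hT.mem_stdMon_of_le hm hwm)
  · obtain ⟨f, hf, hf0, hf_lead⟩ := not_not.1 hmn
    obtain ⟨g, hg, mg, hg_lead, hmg⟩ := hG.2 f hf hf0 m hf_lead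
    obtain ⟨w, hw, hle⟩ := hdd g hg
    exact hm g hg w hw hle ((hlead hw hle).unique hg_lead ▸ hmg)

end Groebner

section LexStable
variable {n : ℕ} {F : Type*} [Field F] {I : Ideal (MvPolynomial (Fin n) F)}

theorem exists_degDominated_mem_of_stdMon_lexOrder_eq
    (hI : ∀ σ, stdMon (lexOrder σ) I = stdMon (lexOrder 1) I) {m : Mon n}
    (hm : m ∉ stdMon (lexOrder 1) I) :
    ∃ g ∈ I, coeff m g = 1 ∧ ∀ v ∈ g.support, v ≤ m := by
  classical
  have hnf (σ : Equiv.Perm (Fin n)) : ∃ r, monomial m 1 - r ∈ I ∧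
      ∀ s ∈ r.support, s ∈ stdMon (lexOrder 1) I ∧ lexLt σ s m := by
    obtain ⟨r, hr, hrs⟩ := (isLexOrder_lexOrder σ).isTermOrder.exists_sub_mem_stdMon (I := I) m
    refine ⟨r, hr, fun s hs => ?_⟩
    obtain ⟨hstd, hle⟩ := hrs s hs
    rw [hI σ] at hstd
    refine ⟨hstd, (isLexOrder_lexOrder σ s m).1 (@lt_of_le_of_ne _ (lexOrder σ).toPartialOrder
      _ _ hle ?_)⟩
    rintro rfl
    exact hm hstd
  choose r hr hrs using hnf
  have hr_eq (σ : Equiv.Perm (Fin n)) : r σ = r 1 := by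
    refine (sub_eq_zero.1 ?_).symm
    refine eq_zero_of_support_subset_stdMon (lin := lexOrder 1) (I := I) ?_ ?_
    · simpa using I.sub_mem (hr σ) (hr 1)
    · intro s hs
      rcases Finset.mem_union.1 (support_sub _ _ _ hs) with hs | hs
      · exact (hrs 1 s hs).1
      · exact (hrs σ s hs).1
  have hm_r : m ∉ (r 1).support := fun h => hm (hrs 1 m h).1
  refine ⟨monomial m 1 - r 1, hr 1, by simpa using hm_r, fun v hv => ?_⟩
  rcases Finset.mem_union.1 (support_sub _ _ _ hv) with hv | hv
  · rw [Finset.mem_singleton.1 (support_monomial_subset hv)]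
  · exact le_of_forall_lexLt fun σ => (hrs σ v (hr_eq σ ▸ hv)).2

theorem exists_degDominated_isUnivGroebner_of_stdMon_lexOrder_eq
    (hI : ∀ σ, stdMon (lexOrder σ) I = stdMon (lexOrder 1) I) :
    ∃ G : Finset (MvPolynomial (Fin n) F),
      (∀ g ∈ G, IsDegDominated g) ∧ IsUnivGroebner G I := by
  classical
  set S := stdMon (lexOrder 1) I
  set M := {m | Minimal (· ∉ S) m}
  have hM : M.Finite := WellQuasiOrderedLE.finite_of_isAntichain (setOfPred_minimal_antichain _)
  choose! g hgI hgc hgle using fun m (hm : m ∈ M) =>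
    exists_degDominated_mem_of_stdMon_lexOrder_eq hI hm.1
  refine ⟨hM.toFinset.image g, ?_, fun lin hT => ?_⟩
  · simp only [Finset.mem_image, Set.Finite.mem_toFinset, forall_exists_index, and_imp]
    rintro _ m hm rfl
    exact ⟨m, hgc m hm, hgle m hm⟩
  have hlead {m : Mon n} (hm : m ∈ M) : IsLeadMon lin (g m) m :=
    hT.isLeadMon_of_le (by simp [hgc m hm]) (hgle m hm)
  have hstd : stdMon lin I = S := by
    refine hT.stdMon_eq_of_subset fun t ht => by_contra fun htS => ?_
    obtain ⟨m, hmt, hm⟩ := exists_minimal_le_of_wellFoundedLT (· ∉ S) t htS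
    exact (hlead hm).notMem_stdMon (hgI m hm) (hT.mem_stdMon_of_le ht hmt)
  refine ⟨?_, fun f hf hf0 m' hf_lead => ?_⟩
  · simp only [Finset.mem_image, Set.Finite.mem_toFinset, forall_exists_index, and_imp]
    rintro _ m hm rfl
    exact hgI m hm
  obtain ⟨m, hmm', hm⟩ := exists_minimal_le_of_wellFoundedLT (· ∉ S) m'
    (hstd ▸ hf_lead.notMem_stdMon hf)
  exact ⟨g m, Finset.mem_image_of_mem g (hM.mem_toFinset.2 hm), m, hlead hm, hmm'⟩

end LexStable

/-- Theorem `genextrGrobner`.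
A finite set of vectors `𝒱 ⊆ {0,…,k-1}^n ⊆ ℝ^n` is extremal if and only if there is a
finite family of degree dominated polynomials forming a universal Gröbner basis of
`I(𝒱)`. -/
theorem extremal_iff_degDominated_universal_groebner {n k : ℕ}
    (V : Finset (Fin n → Fin k)) :
    IsExtremal ((V.image (toField ℝ) : Finset (Fin n → ℝ)) : Set (Fin n → ℝ)) ↔
      ∃ G : Finset (MvPolynomial (Fin n) ℝ),
        (∀ g ∈ G, IsDegDominated g) ∧
          IsUnivGroebner G
            (vanishIdeal ((V.image (toField ℝ) : Finset (Fin n → ℝ)) :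
              Set (Fin n → ℝ))) := by
  constructor
  · intro hext
    exact exists_degDominated_isUnivGroebner_of_stdMon_lexOrder_eq fun σ =>
      hext σ 1 _ _ (isLexOrder_lexOrder σ) (isLexOrder_lexOrder 1)
  · rintro ⟨G, hdd, hG⟩ σ₁ σ₂ lin₁ lin₂ h₁ h₂
    rw [h₁.isTermOrder.stdMon_eq_of_isGroebner hdd (hG _ h₁.isTermOrder),
      h₂.isTermOrder.stdMon_eq_of_isGroebner hdd (hG _ h₂.isTermOrder)]
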